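/- For a set X of cardinality 4, the superextension λ(X) has exactly 12 elements: 4 principal families, 4 families of the form Δᵢ = ⟨A ⊆ X \ {xᵢ} : |A| = 2⟩ (triangles), and 4 families of the form □ᵢ = ⟨X \ {xᵢ}, {xᵢ, y} : y ≠ xᵢ⟩. -/
import Mathlib


/-- `L` is an upfamily: a family of nonempty subsets closed under supersets. -/
def IsUpfamily {α : Type*} (L : Set (Set α)) : Prop :=
  (∀ A ∈ L, A.Nonempty) ∧ ∀ A ∈ L, ∀ B : Set α, A ⊆ B → B ∈ L

/-- `L` is a linked upfamily: an upfamily any two of whose members intersect. -/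
def IsLinkedUp {α : Type*} (L : Set (Set α)) : Prop :=
  IsUpfamily L ∧ ∀ A ∈ L, ∀ B ∈ L, (A ∩ B).Nonempty

/-- `L` is a maximal linked upfamily. -/
def IsMaxLinked {α : Type*} (L : Set (Set α)) : Prop :=
  IsLinkedUp L ∧ ∀ M : Set (Set α), IsLinkedUp M → L ⊆ M → M = L



section General
variable {α : Type*}

lemma principal_maxLinked (x : α) : IsMaxLinked {A : Set α | x ∈ A} := by
  refine ⟨⟨⟨fun A hA => ⟨x, hA⟩, fun A hA B hAB => hAB hA⟩, fun A hA B hB => ⟨x, hA, hB⟩⟩, ?_⟩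
  intro M hM hLM
  ext A
  simp only [Set.mem_setOf_eq]
  constructor
  · intro hA
    by_contra hx
    have h2 : Aᶜ ∈ M := hLM (by simpa using hx)
    obtain ⟨y, hy1, hy2⟩ := hM.2 A hA Aᶜ h2
    exact hy2 hy1
  · exact fun hx => hLM hx

lemma mem_of_meets {L : Set (Set α)} (hL : IsMaxLinked L) {A : Set α}
    (hA : A.Nonempty) (h : ∀ B ∈ L, (A ∩ B).Nonempty) : A ∈ L := by
  have hM : IsLinkedUp {C : Set α | C ∈ L ∨ A ⊆ C} := by
    refine ⟨⟨?_, ?_⟩, ?_⟩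
    · rintro C (hC | hC)
      · exact hL.1.1.1 C hC
      · exact hA.mono hC
    · rintro C (hC | hC) B hCB
      · exact Or.inl (hL.1.1.2 C hC B hCB)
      · exact Or.inr (hC.trans hCB)
    · rintro C (hC | hC) B (hB | hB)
      · exact hL.1.2 C hC B hB
      · obtain ⟨y, hy1, hy2⟩ := h C hC
        exact ⟨y, hy2, hB hy1⟩
      · obtain ⟨y, hy1, hy2⟩ := h B hB
        exact ⟨y, hC hy1, hy2⟩
      · obtain ⟨a, ha⟩ := hA
        exact ⟨a, hC ha, hB ha⟩
  have heq := hL.2 _ hM (fun C hC => Or.inl hC)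
  rw [← heq]
  exact Or.inr subset_rfl

lemma univ_mem [Nonempty α] {L : Set (Set α)} (hL : IsMaxLinked L) : Set.univ ∈ L :=
  mem_of_meets hL Set.univ_nonempty fun B hB => by
    simpa using hL.1.1.1 B hB

lemma compl_mem [Nonempty α] {L : Set (Set α)} (hL : IsMaxLinked L) {A : Set α}
    (hA : A ∉ L) : Aᶜ ∈ L := by
  rcases A.eq_empty_or_nonempty with rfl | hne
  · simpa using univ_mem hL
  · have : ¬ ∀ B ∈ L, (A ∩ B).Nonempty := fun hmeet => hA (mem_of_meets hL hne hmeet)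
    push_neg at this
    obtain ⟨B, hB, hAB⟩ := this
    exact hL.1.1.2 B hB Aᶜ fun y hy hyA =>
      Set.eq_empty_iff_forall_notMem.mp hAB y ⟨hyA, hy⟩

lemma notMem_of_compl_mem {L : Set (Set α)} (hL : IsMaxLinked L) {A : Set α}
    (hA : Aᶜ ∈ L) : A ∉ L := fun h => by
  obtain ⟨y, hy1, hy2⟩ := hL.1.2 A h Aᶜ hA
  exact hy2 hy1

end General

section Card4
variable {X : Type*} [Finite X]

lemma ncard_le_four (h : Nat.card X = 4) (A : Set X) : A.ncard ≤ 4 := by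
  have := Set.ncard_le_ncard (Set.subset_univ A) (Set.toFinite _)
  rwa [Set.ncard_univ, h] at this

lemma ncard_compl_eq (h : Nat.card X = 4) (A : Set X) : Aᶜ.ncard = 4 - A.ncard := by
  have := Set.ncard_add_ncard_compl A (Set.toFinite _) (Set.toFinite _)
  rw [h] at this
  omega

lemma ncard_compl_singleton (h : Nat.card X = 4) (x : X) : ({x}ᶜ : Set X).ncard = 3 := by
  rw [ncard_compl_eq h, Set.ncard_singleton]

lemma pairs_meet (h : Nat.card X = 4) {s B C : Set X} (hB : B ⊆ s) (hC : C ⊆ s)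
    (hs : s.ncard = 3) (hB2 : B.ncard = 2) (hC2 : C.ncard = 2) : (B ∩ C).Nonempty := by
  rw [Set.nonempty_iff_ne_empty]
  intro hemp
  have hdisj : Disjoint B C := Set.disjoint_iff_inter_eq_empty.mpr hemp
  have h1 : (B ∪ C).ncard = 4 := by
    rw [Set.ncard_union_eq hdisj (Set.toFinite _) (Set.toFinite _), hB2, hC2]
  have h2 : (B ∪ C).ncard ≤ 3 := hs ▸ Set.ncard_le_ncard (Set.union_subset hB hC) (Set.toFinite _)
  omega

lemma tri_maxLinked (h : Nat.card X = 4) (x : X) :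
    IsMaxLinked {A : Set X | ∃ B : Set X, B.ncard = 2 ∧ x ∉ B ∧ B ⊆ A} := by
  have hsub : ∀ B : Set X, x ∉ B → B ⊆ ({x}ᶜ : Set X) := by
    intro B hx y hy hyx
    exact hx (by rwa [Set.mem_singleton_iff.mp hyx] at hy)
  refine ⟨⟨⟨?_, ?_⟩, ?_⟩, ?_⟩
  · rintro A ⟨B, hB2, hBx, hBA⟩
    have : B.Nonempty := by
      rw [← Set.ncard_pos (Set.toFinite _)]; omega
    exact this.mono hBA
  · rintro A ⟨B, hB2, hBx, hBA⟩ C hAC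
    exact ⟨B, hB2, hBx, hBA.trans hAC⟩
  · rintro A ⟨B, hB2, hBx, hBA⟩ A' ⟨B', hB2', hBx', hBA'⟩
    have := pairs_meet h (hsub B hBx) (hsub B' hBx') (ncard_compl_singleton h x) hB2 hB2'
    exact this.mono (Set.inter_subset_inter hBA hBA')
  · intro M hM hLM
    ext A
    constructor
    · intro hA
      have hkey : 2 ≤ (A ∩ {x}ᶜ : Set X).ncard := by
        by_contra hlt
        push_neg at hlt
        have hdiff : 2 ≤ (({x}ᶜ : Set X) \ A).ncard := by
          have := Set.ncard_inter_add_ncard_diff_eq_ncard ({x}ᶜ : Set X) A (Set.toFinite _)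
          rw [ncard_compl_singleton h x] at this
          rw [Set.inter_comm] at this
          omega
        obtain ⟨B, hBsub, hB2⟩ := Set.exists_subset_card_eq hdiff
        have hBL : B ∈ {A : Set X | ∃ B : Set X, B.ncard = 2 ∧ x ∉ B ∧ B ⊆ A} :=
          ⟨B, hB2, fun hx => ((hBsub hx).1 rfl), subset_rfl⟩
        obtain ⟨y, hy1, hy2⟩ := hM.2 A hA B (hLM hBL)
        exact (hBsub hy2).2 hy1
      obtain ⟨B, hBsub, hB2⟩ := Set.exists_subset_card_eq hkey
      exact ⟨B, hB2, fun hx => (hBsub hx).2 rfl, fun y hy => (hBsub hy).1⟩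
    · exact fun hA => hLM hA

lemma sq_maxLinked (h : Nat.card X = 4) (x : X) :
    IsMaxLinked {A : Set X | ({x}ᶜ : Set X) ⊆ A ∨ ∃ y : X, y ≠ x ∧ ({x, y} : Set X) ⊆ A} := by
  have hcne : ({x}ᶜ : Set X).Nonempty := by
    rw [← Set.ncard_pos (Set.toFinite _), ncard_compl_singleton h x]; omega
  refine ⟨⟨⟨?_, ?_⟩, ?_⟩, ?_⟩
  · rintro A (hA | ⟨y, hy, hA⟩)
    · exact hcne.mono hA
    · exact ⟨x, hA (Set.mem_insert _ _)⟩
  · rintro A (hA | ⟨y, hy, hA⟩) C hAC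
    · exact Or.inl (hA.trans hAC)
    · exact Or.inr ⟨y, hy, hA.trans hAC⟩
  · rintro A (hA | ⟨y, hy, hA⟩) A' (hA' | ⟨y', hy', hA'⟩)
    · exact hcne.mono (Set.subset_inter hA hA')
    · exact ⟨y', hA (by simpa using hy'), hA' (Set.mem_insert_of_mem _ rfl)⟩
    · exact ⟨y, hA (Set.mem_insert_of_mem _ rfl), hA' (by simpa using hy)⟩
    · exact ⟨x, hA (Set.mem_insert _ _), hA' (Set.mem_insert _ _)⟩
  · intro M hM hLM
    ext A
    constructor
    · intro hA
      have hcm : ({x}ᶜ : Set X) ∈ M := hLM (Or.inl subset_rfl)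
      obtain ⟨z, hz1, hz2⟩ := hM.2 A hA _ hcm
      have hzx : z ≠ x := by simpa using hz2
      by_cases hxA : x ∈ A
      · exact Or.inr ⟨z, hzx, by
          intro w hw
          rcases hw with rfl | hw
          · exact hxA
          · rwa [Set.mem_singleton_iff.mp hw]⟩
      · left
        intro w hw
        have hwx : w ≠ x := by simpa using hw
        by_contra hwA
        have hpm : ({x, w} : Set X) ∈ M := hLM (Or.inr ⟨w, hwx, subset_rfl⟩)
        obtain ⟨u, hu1, hu2⟩ := hM.2 A hA _ hpm
        rcases hu2 with rfl | hu2
        · exact hxA hu1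
        · rw [Set.mem_singleton_iff.mp hu2] at hu1
          exact hwA hu1
    · exact fun hA => hLM hA

end Card4

section Labeled
variable {X : Type*} [Finite X] {a b c d : X}

lemma pair_cases (hab : a ≠ b) (hac : a ≠ c) (had : a ≠ d) (hbc : b ≠ c) (hbd : b ≠ d)
    (hcd : c ≠ d) (hcov : ∀ z : X, z = a ∨ z = b ∨ z = c ∨ z = d)
    {B : Set X} (h2 : B.ncard = 2) :
    B = {a, b} ∨ B = {a, c} ∨ B = {a, d} ∨ B = {b, c} ∨ B = {b, d} ∨ B = {c, d} := by
  obtain ⟨u, v, huv, rfl⟩ := Set.ncard_eq_two.mp h2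
  rcases hcov u with rfl | rfl | rfl | rfl <;> rcases hcov v with rfl | rfl | rfl | rfl <;>
    simp_all [Set.pair_comm] <;> tauto

lemma compl_pair_eq (hab : a ≠ b) (hac : a ≠ c) (had : a ≠ d) (hbc : b ≠ c) (hbd : b ≠ d)
    (hcd : c ≠ d) (hcov : ∀ z : X, z = a ∨ z = b ∨ z = c ∨ z = d) :
    ({a, b}ᶜ : Set X) = {c, d} := by
  ext z
  rcases hcov z with rfl | rfl | rfl | rfl <;>
    simp [hab, hac, had, hbc, hbd, hcd, hab.symm, hac.symm, had.symm, hbc.symm, hbd.symm, hcd.symm]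

lemma pair_disj (hab : a ≠ b) (hac : a ≠ c) (had : a ≠ d) (hbc : b ≠ c) (hbd : b ≠ d)
    (hcd : c ≠ d) : ({a, b} : Set X) ∩ {c, d} = ∅ := by
  ext z
  simp only [Set.mem_inter_iff, Set.mem_insert_iff, Set.mem_singleton_iff, Set.mem_empty_iff_false,
    iff_false, not_and]
  rintro (rfl | rfl) (h | h) <;> [exact hac h; exact had h; exact hbc h; exact hbd h]

end Labeled

section Labeled2
variable {X : Type*} [Finite X] {a b c d : X}

lemma pair_subset_compl {x y z : X} (h1 : x ≠ z) (h2 : y ≠ z) :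
    ({x, y} : Set X) ⊆ ({z}ᶜ : Set X) := by
  intro w hw
  simp only [Set.mem_insert_iff, Set.mem_singleton_iff] at hw
  rcases hw with rfl | rfl
  · simpa using h1
  · simpa using h2

lemma star_case (h : Nat.card X = 4) (hab : a ≠ b) (hac : a ≠ c) (had : a ≠ d)
    (hbc : b ≠ c) (hbd : b ≠ d) (hcd : c ≠ d)
    (hcov : ∀ z : X, z = a ∨ z = b ∨ z = c ∨ z = d)
    {L : Set (Set X)} (hL : IsMaxLinked L) (hns : ∀ z : X, {z} ∉ L)
    (h1 : ({a, b} : Set X) ∈ L) (h2 : ({a, c} : Set X) ∈ L) (h3 : ({a, d} : Set X) ∈ L) :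
    L = {A : Set X | ({a}ᶜ : Set X) ⊆ A ∨ ∃ y : X, y ≠ a ∧ ({a, y} : Set X) ⊆ A} := by
  have hNE : Nonempty X := ⟨a⟩
  ext A
  simp only [Set.mem_setOf_eq]
  constructor
  · intro hA
    have h1le : 1 ≤ A.ncard := (Set.ncard_pos (Set.toFinite _)).mpr (hL.1.1.1 A hA)
    have h4le : A.ncard ≤ 4 := ncard_le_four h A
    have hne1 : A.ncard ≠ 1 := by
      intro h1'
      obtain ⟨u, rfl⟩ := Set.ncard_eq_one.mp h1'
      exact hns u hA
    have hcase : A.ncard = 2 ∨ A.ncard = 3 ∨ A.ncard = 4 := by omega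
    rcases hcase with h2' | h3' | h4'
    · rcases pair_cases hab hac had hbc hbd hcd hcov h2' with rfl | rfl | rfl | rfl | rfl | rfl
      · exact Or.inr ⟨b, Ne.symm hab, subset_rfl⟩
      · exact Or.inr ⟨c, Ne.symm hac, subset_rfl⟩
      · exact Or.inr ⟨d, Ne.symm had, subset_rfl⟩
      · exact absurd (hL.1.2 _ hA _ h3)
          (by rw [pair_disj hbc (Ne.symm hab) hbd (Ne.symm hac) hcd had]
              exact Set.not_nonempty_empty)
      · exact absurd (hL.1.2 _ hA _ h2)
          (by rw [pair_disj hbd (Ne.symm hab) hbc (Ne.symm had) (Ne.symm hcd) hac]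
              exact Set.not_nonempty_empty)
      · exact absurd (hL.1.2 _ hA _ h1)
          (by rw [pair_disj hcd (Ne.symm hac) (Ne.symm hbc) (Ne.symm had) (Ne.symm hbd) hab]
              exact Set.not_nonempty_empty)
    · have hc1 : Aᶜ.ncard = 1 := by rw [ncard_compl_eq h]; omega
      obtain ⟨u, hu⟩ := Set.ncard_eq_one.mp hc1
      have hAu : A = ({u}ᶜ : Set X) := by rw [← hu, compl_compl]
      rcases hcov u with rfl | rfl | rfl | rfl
      · exact Or.inl (subset_of_eq hAu.symm)
      · exact Or.inr ⟨c, Ne.symm hac, (by rw [hAu]; exact pair_subset_compl hab hbc.symm)⟩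
      · exact Or.inr ⟨b, Ne.symm hab, (by rw [hAu]; exact pair_subset_compl hac hbc)⟩
      · exact Or.inr ⟨b, Ne.symm hab, (by rw [hAu]; exact pair_subset_compl had hbd)⟩
    · have : A = Set.univ := Set.eq_of_subset_of_ncard_le (Set.subset_univ A)
        (by rw [Set.ncard_univ, h]; omega) (Set.toFinite _)
      exact Or.inl (this ▸ Set.subset_univ _)
  · rintro (hsub | ⟨y, hy, hsub⟩)
    · exact hL.1.1.2 _ (compl_mem hL (hns a)) A hsub
    · rcases hcov y with rfl | rfl | rfl | rfl
      · exact absurd rfl hy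
      · exact hL.1.1.2 _ h1 A hsub
      · exact hL.1.1.2 _ h2 A hsub
      · exact hL.1.1.2 _ h3 A hsub

lemma tri_case (h : Nat.card X = 4) (hab : a ≠ b) (hac : a ≠ c) (had : a ≠ d)
    (hbc : b ≠ c) (hbd : b ≠ d) (hcd : c ≠ d)
    (hcov : ∀ z : X, z = a ∨ z = b ∨ z = c ∨ z = d)
    {L : Set (Set X)} (hL : IsMaxLinked L) (hns : ∀ z : X, {z} ∉ L)
    (h1 : ({a, b} : Set X) ∈ L) (h2 : ({a, c} : Set X) ∈ L) (h3 : ({b, c} : Set X) ∈ L) :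
    L = {A : Set X | ∃ B : Set X, B.ncard = 2 ∧ d ∉ B ∧ B ⊆ A} := by
  have hNE : Nonempty X := ⟨a⟩
  have hdab : d ∉ ({a, b} : Set X) := by simp [Ne.symm had, Ne.symm hbd]
  have hdac : d ∉ ({a, c} : Set X) := by simp [Ne.symm had, Ne.symm hcd]
  have hdbc : d ∉ ({b, c} : Set X) := by simp [Ne.symm hbd, Ne.symm hcd]
  ext A
  simp only [Set.mem_setOf_eq]
  constructor
  · intro hA
    have h1le : 1 ≤ A.ncard := (Set.ncard_pos (Set.toFinite _)).mpr (hL.1.1.1 A hA)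
    have h4le : A.ncard ≤ 4 := ncard_le_four h A
    have hne1 : A.ncard ≠ 1 := by
      intro h1'
      obtain ⟨u, rfl⟩ := Set.ncard_eq_one.mp h1'
      exact hns u hA
    have hcase : A.ncard = 2 ∨ A.ncard = 3 ∨ A.ncard = 4 := by omega
    rcases hcase with h2' | h3' | h4'
    · rcases pair_cases hab hac had hbc hbd hcd hcov h2' with rfl | rfl | rfl | rfl | rfl | rfl
      · exact ⟨_, Set.ncard_pair hab, hdab, subset_rfl⟩
      · exact ⟨_, Set.ncard_pair hac, hdac, subset_rfl⟩
      · exact absurd (hL.1.2 _ hA _ h3)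
          (by rw [pair_disj had hab hac (Ne.symm hbd) (Ne.symm hcd) hbc]
              exact Set.not_nonempty_empty)
      · exact ⟨_, Set.ncard_pair hbc, hdbc, subset_rfl⟩
      · exact absurd (hL.1.2 _ hA _ h2)
          (by rw [pair_disj hbd (Ne.symm hab) hbc (Ne.symm had) (Ne.symm hcd) hac]
              exact Set.not_nonempty_empty)
      · exact absurd (hL.1.2 _ hA _ h1)
          (by rw [pair_disj hcd (Ne.symm hac) (Ne.symm hbc) (Ne.symm had) (Ne.symm hbd) hab]
              exact Set.not_nonempty_empty)
    · have hc1 : Aᶜ.ncard = 1 := by rw [ncard_compl_eq h]; omega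
      obtain ⟨u, hu⟩ := Set.ncard_eq_one.mp hc1
      have hAu : A = ({u}ᶜ : Set X) := by rw [← hu, compl_compl]
      rcases hcov u with rfl | rfl | rfl | rfl
      · exact ⟨{b, c}, Set.ncard_pair hbc, hdbc, (by rw [hAu]; exact pair_subset_compl (Ne.symm hab) (Ne.symm hac))⟩
      · exact ⟨{a, c}, Set.ncard_pair hac, hdac, (by rw [hAu]; exact pair_subset_compl hab (Ne.symm hbc))⟩
      · exact ⟨{a, b}, Set.ncard_pair hab, hdab, (by rw [hAu]; exact pair_subset_compl hac hbc)⟩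
      · exact ⟨{a, b}, Set.ncard_pair hab, hdab, (by rw [hAu]; exact pair_subset_compl had hbd)⟩
    · have : A = Set.univ := Set.eq_of_subset_of_ncard_le (Set.subset_univ A)
        (by rw [Set.ncard_univ, h]; omega) (Set.toFinite _)
      exact ⟨{a, b}, Set.ncard_pair hab, hdab, this ▸ Set.subset_univ _⟩
  · rintro ⟨B, hB2, hdB, hBA⟩
    rcases pair_cases hab hac had hbc hbd hcd hcov hB2 with rfl | rfl | rfl | rfl | rfl | rfl
    · exact hL.1.1.2 _ h1 A hBA
    · exact hL.1.1.2 _ h2 A hBA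
    · exact absurd (by simp : d ∈ ({a, d} : Set X)) hdB
    · exact hL.1.1.2 _ h3 A hBA
    · exact absurd (by simp : d ∈ ({b, d} : Set X)) hdB
    · exact absurd (by simp : d ∈ ({c, d} : Set X)) hdB

end Labeled2

lemma exists_four {X : Type*} [Finite X] (h : Nat.card X = 4) :
    ∃ a b c d : X, a ≠ b ∧ a ≠ c ∧ a ≠ d ∧ b ≠ c ∧ b ≠ d ∧ c ≠ d ∧
      ∀ z : X, z = a ∨ z = b ∨ z = c ∨ z = d := by
  haveI := Fintype.ofFinite X
  have hc : Fintype.card X = 4 := by rw [← Nat.card_eq_fintype_card, h]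
  have e := Fintype.equivFinOfCardEq hc
  refine ⟨e.symm 0, e.symm 1, e.symm 2, e.symm 3,
    e.symm.injective.ne (by decide), e.symm.injective.ne (by decide),
    e.symm.injective.ne (by decide), e.symm.injective.ne (by decide),
    e.symm.injective.ne (by decide), e.symm.injective.ne (by decide), ?_⟩
  intro z
  have hz : z = e.symm (e z) := (e.symm_apply_apply z).symm
  have hfin : ∀ i : Fin 4, i = 0 ∨ i = 1 ∨ i = 2 ∨ i = 3 := by decide
  rcases hfin (e z) with h0 | h0 | h0 | h0 <;> rw [h0] at hz <;> tauto

theorem maxLinked_iff {X : Type*} [Finite X] (h : Nat.card X = 4) (L : Set (Set X)) :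
    IsMaxLinked L ↔
      ((∃ x : X, L = {A : Set X | x ∈ A}) ∨
       (∃ x : X, L = {A : Set X | ∃ B : Set X, B.ncard = 2 ∧ x ∉ B ∧ B ⊆ A}) ∨
       (∃ x : X, L = {A : Set X | ({x}ᶜ : Set X) ⊆ A ∨
          ∃ y : X, y ≠ x ∧ ({x, y} : Set X) ⊆ A})) := by
  obtain ⟨a, b, c, d, hab, hac, had, hbc, hbd, hcd, hcov⟩ := exists_four h
  haveI : Nonempty X := ⟨a⟩
  constructor
  · intro hL
    by_cases hsing : ∃ z : X, ({z} : Set X) ∈ L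
    · obtain ⟨x, hx⟩ := hsing
      left
      refine ⟨x, ?_⟩
      ext A
      simp only [Set.mem_setOf_eq]
      constructor
      · intro hA
        obtain ⟨y, hy1, hy2⟩ := hL.1.2 A hA _ hx
        rwa [← Set.mem_singleton_iff.mp hy2]
      · intro hA
        exact hL.1.1.2 _ hx A (Set.singleton_subset_iff.mpr hA)
    · push_neg at hsing
      have hP1 : ({a, b} : Set X) ∈ L ∨ ({c, d} : Set X) ∈ L := by
        by_cases hx : ({a, b} : Set X) ∈ L
        · exact Or.inl hx
        · have := compl_mem hL hx
          rw [compl_pair_eq hab hac had hbc hbd hcd hcov] at this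
          exact Or.inr this
      have hP2 : ({a, c} : Set X) ∈ L ∨ ({b, d} : Set X) ∈ L := by
        by_cases hx : ({a, c} : Set X) ∈ L
        · exact Or.inl hx
        · have := compl_mem hL hx
          rw [compl_pair_eq hac hab had (Ne.symm hbc) hcd hbd
            (fun z => by rcases hcov z with rfl | rfl | rfl | rfl <;> tauto)] at this
          exact Or.inr this
      have hP3 : ({a, d} : Set X) ∈ L ∨ ({b, c} : Set X) ∈ L := by
        by_cases hx : ({a, d} : Set X) ∈ L
        · exact Or.inl hx
        · have := compl_mem hL hx
          rw [compl_pair_eq had hab hac (Ne.symm hbd) (Ne.symm hcd) hbc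
            (fun z => by rcases hcov z with rfl | rfl | rfl | rfl <;> tauto)] at this
          exact Or.inr this
      rcases hP1 with hab' | hcd' <;> rcases hP2 with hac' | hbd' <;> rcases hP3 with had' | hbc'
      · exact Or.inr (Or.inr ⟨a, star_case h hab hac had hbc hbd hcd hcov hL hsing hab' hac' had'⟩)
      · exact Or.inr (Or.inl ⟨d, tri_case h hab hac had hbc hbd hcd hcov hL hsing hab' hac' hbc'⟩)
      · exact Or.inr (Or.inl ⟨c, tri_case h hab had hac hbd hbc (Ne.symm hcd)
          (fun z => by rcases hcov z with rfl | rfl | rfl | rfl <;> tauto) hL hsing hab' had' hbd'⟩)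
      · exact Or.inr (Or.inr ⟨b, star_case h (Ne.symm hab) hbc hbd hac had hcd
          (fun z => by rcases hcov z with rfl | rfl | rfl | rfl <;> tauto) hL hsing
          (by rwa [Set.pair_comm b a]) hbc' hbd'⟩)
      · exact Or.inr (Or.inl ⟨b, tri_case h hac had hab hcd (Ne.symm hbc) (Ne.symm hbd)
          (fun z => by rcases hcov z with rfl | rfl | rfl | rfl <;> tauto) hL hsing hac' had' hcd'⟩)
      · exact Or.inr (Or.inr ⟨c, star_case h (Ne.symm hac) (Ne.symm hbc) hcd hab had hbd
          (fun z => by rcases hcov z with rfl | rfl | rfl | rfl <;> tauto) hL hsing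
          (by rwa [Set.pair_comm c a]) (by rwa [Set.pair_comm c b]) hcd'⟩)
      · exact Or.inr (Or.inr ⟨d, star_case h (Ne.symm had) (Ne.symm hbd) (Ne.symm hcd) hab hac hbc
          (fun z => by rcases hcov z with rfl | rfl | rfl | rfl <;> tauto) hL hsing
          (by rwa [Set.pair_comm d a]) (by rwa [Set.pair_comm d b]) (by rwa [Set.pair_comm d c])⟩)
      · exact Or.inr (Or.inl ⟨a, tri_case h hbc hbd (Ne.symm hab) hcd (Ne.symm hac) (Ne.symm had)
          (fun z => by rcases hcov z with rfl | rfl | rfl | rfl <;> tauto) hL hsing hbc' hbd' hcd'⟩)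
  · rintro (⟨x, rfl⟩ | ⟨x, rfl⟩ | ⟨x, rfl⟩)
    · exact principal_maxLinked x
    · exact tri_maxLinked h x
    · exact sq_maxLinked h x

section Counting
variable {X : Type*} [Finite X]

lemma sing_notMem_tri (x z : X) :
    ({z} : Set X) ∉ {A : Set X | ∃ B : Set X, B.ncard = 2 ∧ x ∉ B ∧ B ⊆ A} := by
  rintro ⟨B, hB2, _, hB⟩
  have := Set.ncard_le_ncard hB (Set.toFinite _)
  rw [hB2, Set.ncard_singleton] at this
  omega

lemma sing_notMem_sq (h : Nat.card X = 4) (x z : X) :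
    ({z} : Set X) ∉ {A : Set X | ({x}ᶜ : Set X) ⊆ A ∨
      ∃ y : X, y ≠ x ∧ ({x, y} : Set X) ⊆ A} := by
  rintro (hl | ⟨y, hy, hsub⟩)
  · have := Set.ncard_le_ncard hl (Set.toFinite _)
    rw [ncard_compl_singleton h, Set.ncard_singleton] at this
    omega
  · have h1 : x ∈ ({z} : Set X) := hsub (Set.mem_insert _ _)
    have h2 : y ∈ ({z} : Set X) := hsub (Set.mem_insert_of_mem _ rfl)
    rw [Set.mem_singleton_iff] at h1 h2
    exact hy (h2.trans h1.symm)

lemma exists_notin_pair (h : Nat.card X = 4) (x y : X) : ∃ z : X, z ≠ x ∧ z ≠ y := by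
  have h1 : ({x, y} : Set X).ncard ≤ 2 := by
    apply (Set.ncard_insert_le _ _).trans
    rw [Set.ncard_singleton]
  have h2 : 0 < ({x, y}ᶜ : Set X).ncard := by
    rw [ncard_compl_eq h]; omega
  obtain ⟨z, hz⟩ := (Set.ncard_pos (Set.toFinite _)).mp h2
  simp only [Set.mem_compl_iff, Set.mem_insert_iff, Set.mem_singleton_iff, not_or] at hz
  exact ⟨z, hz.1, hz.2⟩

lemma exists_notin_triple (h : Nat.card X = 4) (x y z : X) :
    ∃ w : X, w ≠ x ∧ w ≠ y ∧ w ≠ z := by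
  have h1 : ({x, y, z} : Set X).ncard ≤ 3 := by
    apply (Set.ncard_insert_le _ _).trans
    have : ({y, z} : Set X).ncard ≤ 2 := by
      apply (Set.ncard_insert_le _ _).trans
      rw [Set.ncard_singleton]
    omega
  have h2 : 0 < ({x, y, z}ᶜ : Set X).ncard := by
    rw [ncard_compl_eq h]; omega
  obtain ⟨w, hw⟩ := (Set.ncard_pos (Set.toFinite _)).mp h2
  simp only [Set.mem_compl_iff, Set.mem_insert_iff, Set.mem_singleton_iff, not_or] at hw
  exact ⟨w, hw.1, hw.2.1, hw.2.2⟩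

end Counting

section Counting2
variable {X : Type*} [Finite X]

lemma tri_inj (h : Nat.card X = 4) {x y : X} (hxy : x ≠ y) :
    {A : Set X | ∃ B : Set X, B.ncard = 2 ∧ x ∉ B ∧ B ⊆ A} ≠
    {A : Set X | ∃ B : Set X, B.ncard = 2 ∧ y ∉ B ∧ B ⊆ A} := by
  intro heq
  obtain ⟨z, hzx, hzy⟩ := exists_notin_pair h x y
  have hyz : y ≠ z := Ne.symm hzy
  have hmem : ({y, z} : Set X) ∈ {A : Set X | ∃ B : Set X, B.ncard = 2 ∧ x ∉ B ∧ B ⊆ A} :=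
    ⟨{y, z}, Set.ncard_pair hyz, by simp [hxy, Ne.symm hzx], subset_rfl⟩
  rw [heq] at hmem
  obtain ⟨B, hB2, hyB, hsub⟩ := hmem
  have hBeq : B = {y, z} := Set.eq_of_subset_of_ncard_le hsub
    (by rw [hB2, Set.ncard_pair hyz]) (Set.toFinite _)
  exact hyB (hBeq ▸ Set.mem_insert _ _)

lemma sq_inj (h : Nat.card X = 4) {x y : X} (hxy : x ≠ y) :
    {A : Set X | ({x}ᶜ : Set X) ⊆ A ∨ ∃ u : X, u ≠ x ∧ ({x, u} : Set X) ⊆ A} ≠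
    {A : Set X | ({y}ᶜ : Set X) ⊆ A ∨ ∃ u : X, u ≠ y ∧ ({y, u} : Set X) ⊆ A} := by
  intro heq
  obtain ⟨z, hzx, hzy⟩ := exists_notin_pair h x y
  have hmem : ({x, z} : Set X) ∈
      {A : Set X | ({x}ᶜ : Set X) ⊆ A ∨ ∃ u : X, u ≠ x ∧ ({x, u} : Set X) ⊆ A} :=
    Or.inr ⟨z, hzx, subset_rfl⟩
  rw [heq] at hmem
  rcases hmem with hl | ⟨u, hu, hsub⟩
  · obtain ⟨w, hwx, hwy, hwz⟩ := exists_notin_triple h x y z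
    have : w ∈ ({x, z} : Set X) := hl (by simpa using hwy)
    simp only [Set.mem_insert_iff, Set.mem_singleton_iff] at this
    rcases this with rfl | rfl
    · exact hwx rfl
    · exact hwz rfl
  · have : y ∈ ({x, z} : Set X) := hsub (Set.mem_insert _ _)
    simp only [Set.mem_insert_iff, Set.mem_singleton_iff] at this
    rcases this with rfl | rfl
    · exact hxy rfl
    · exact hzy rfl

lemma tri_ne_sq (h : Nat.card X = 4) (x y : X) :
    {A : Set X | ∃ B : Set X, B.ncard = 2 ∧ x ∉ B ∧ B ⊆ A} ≠
    {A : Set X | ({y}ᶜ : Set X) ⊆ A ∨ ∃ u : X, u ≠ y ∧ ({y, u} : Set X) ⊆ A} := by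
  intro heq
  by_cases hxy : x = y
  · subst hxy
    obtain ⟨z, hz⟩ := (Set.ncard_pos (Set.toFinite _)).mp
      (by rw [ncard_compl_singleton h x]; omega : 0 < ({x}ᶜ : Set X).ncard)
    have hzx : z ≠ x := by simpa using hz
    have hmem : ({x, z} : Set X) ∈
        {A : Set X | ({x}ᶜ : Set X) ⊆ A ∨ ∃ u : X, u ≠ x ∧ ({x, u} : Set X) ⊆ A} :=
      Or.inr ⟨z, hzx, subset_rfl⟩
    rw [← heq] at hmem
    obtain ⟨B, hB2, hxB, hsub⟩ := hmem
    have hBz : B ⊆ {z} := by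
      intro w hw
      rcases hsub hw with rfl | hw'
      · exact absurd hw hxB
      · exact hw'
    have := Set.ncard_le_ncard hBz (Set.toFinite _)
    rw [hB2, Set.ncard_singleton] at this
    omega
  · have hpc : ({x, y}ᶜ : Set X).ncard = 2 := by
      rw [ncard_compl_eq h, Set.ncard_pair hxy]
    obtain ⟨u, v, huv, huvs⟩ := Set.ncard_eq_two.mp hpc
    have hux : u ∉ ({x, y} : Set X) := by
      rw [← Set.mem_compl_iff, huvs]; exact Set.mem_insert _ _
    have hvx : v ∉ ({x, y} : Set X) := by
      rw [← Set.mem_compl_iff, huvs]; exact Set.mem_insert_of_mem _ rfl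
    simp only [Set.mem_insert_iff, Set.mem_singleton_iff, not_or] at hux hvx
    have hmem : ({u, v} : Set X) ∈ {A : Set X | ∃ B : Set X, B.ncard = 2 ∧ x ∉ B ∧ B ⊆ A} :=
      ⟨{u, v}, Set.ncard_pair huv, by simp [Ne.symm hux.1, Ne.symm hvx.1], subset_rfl⟩
    rw [heq] at hmem
    rcases hmem with hl | ⟨t, ht, hsub⟩
    · have : x ∈ ({u, v} : Set X) := hl (by simpa using hxy)
      simp only [Set.mem_insert_iff, Set.mem_singleton_iff] at this
      rcases this with rfl | rfl
      · exact hux.1 rfl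
      · exact hvx.1 rfl
    · have : y ∈ ({u, v} : Set X) := hsub (Set.mem_insert _ _)
      simp only [Set.mem_insert_iff, Set.mem_singleton_iff] at this
      rcases this with rfl | rfl
      · exact hux.2 rfl
      · exact hvx.2 rfl

end Counting2


/-- For a set `X` of cardinality 4, the superextension `λ(X)` has exactly 12
elements: the 4 principal families, the 4 "triangles" `Δₓ` generated by the
2-element subsets of `X \ {x}`, and the 4 families `□ₓ` generated by `X \ {x}`
together with the pairs `{x, y}`, `y ≠ x`. -/
theorem stmt14 {X : Type*} [Finite X] (h : Nat.card X = 4) :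
    (∀ L : Set (Set X), IsMaxLinked L ↔
      ((∃ x : X, L = {A : Set X | x ∈ A}) ∨
       (∃ x : X, L = {A : Set X | ∃ B : Set X, B.ncard = 2 ∧ x ∉ B ∧ B ⊆ A}) ∨
       (∃ x : X, L = {A : Set X | ({x}ᶜ : Set X) ⊆ A ∨
          ∃ y : X, y ≠ x ∧ ({x, y} : Set X) ⊆ A}))) ∧
    Nat.card {L : Set (Set X) // IsMaxLinked L} = 12 := by
  refine ⟨maxLinked_iff h, ?_⟩
  set P : X → Set (Set X) := fun x => {A : Set X | x ∈ A} with hPdef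
  set T : X → Set (Set X) := fun x => {A : Set X | ∃ B : Set X, B.ncard = 2 ∧ x ∉ B ∧ B ⊆ A}
    with hTdef
  set Q : X → Set (Set X) := fun x => {A : Set X | ({x}ᶜ : Set X) ⊆ A ∨
    ∃ y : X, y ≠ x ∧ ({x, y} : Set X) ⊆ A} with hQdef
  have hset : {L : Set (Set X) | IsMaxLinked L} = (Set.range P ∪ Set.range T) ∪ Set.range Q := by
    ext L
    rw [Set.mem_setOf_eq, maxLinked_iff h L]
    simp only [Set.mem_union, Set.mem_range]
    constructor
    · rintro (⟨x, hx⟩ | ⟨x, hx⟩ | ⟨x, hx⟩)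
      · exact Or.inl (Or.inl ⟨x, hx.symm⟩)
      · exact Or.inl (Or.inr ⟨x, hx.symm⟩)
      · exact Or.inr ⟨x, hx.symm⟩
    · rintro ((⟨x, hx⟩ | ⟨x, hx⟩) | ⟨x, hx⟩)
      · exact Or.inl ⟨x, hx.symm⟩
      · exact Or.inr (Or.inl ⟨x, hx.symm⟩)
      · exact Or.inr (Or.inr ⟨x, hx.symm⟩)
  have hPinj : Function.Injective P := by
    intro x y heq
    have hx : ({x} : Set X) ∈ P x := Set.mem_singleton x
    rw [heq] at hx
    exact (Set.mem_singleton_iff.mp hx).symm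
  have hTinj : Function.Injective T := by
    intro x y heq
    by_contra hxy
    exact tri_inj h hxy heq
  have hQinj : Function.Injective Q := by
    intro x y heq
    by_contra hxy
    exact sq_inj h hxy heq
  have hd1 : Disjoint (Set.range P) (Set.range T) := by
    rw [Set.disjoint_left]
    rintro L ⟨x, rfl⟩ ⟨y, hy⟩
    have hm : ({x} : Set X) ∈ P x := Set.mem_singleton x
    rw [← hy] at hm
    exact sing_notMem_tri y x hm
  have hd2 : Disjoint (Set.range P ∪ Set.range T) (Set.range Q) := by
    rw [Set.disjoint_left]
    rintro L (⟨x, rfl⟩ | ⟨x, rfl⟩) ⟨y, hy⟩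
    · have hm : ({x} : Set X) ∈ P x := Set.mem_singleton x
      rw [← hy] at hm
      exact sing_notMem_sq h y x hm
    · exact tri_ne_sq h x y hy.symm
  have hr : ∀ f : X → Set (Set X), Function.Injective f → (Set.range f).ncard = 4 := by
    intro f hf
    rw [← Set.image_univ, Set.ncard_image_of_injective _ hf, Set.ncard_univ, h]
  calc Nat.card {L : Set (Set X) // IsMaxLinked L}
      = ({L : Set (Set X) | IsMaxLinked L}).ncard := Nat.card_coe_set_eq _
    _ = 12 := by
        rw [hset, Set.ncard_union_eq hd2 (Set.toFinite _) (Set.toFinite _),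
          Set.ncard_union_eq hd1 (Set.toFinite _) (Set.toFinite _),
          hr P hPinj, hr T hTinj, hr Q hQinj]
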